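/- The Teia potential update condition holds for a lazy request served by the unmatched server: let (M,d) be a metric space, k ≥ 1, let s_1,…,s_k and a_1,…,a_k be points of M with s_j = a_j for every j ≠ 1, and let E_1,…,E_k ∈ ℝ. Suppose the request is r = a_1 and server 1 serves it. Define the new server positions ŝ by ŝ_1 = a_1 and ŝ_j = s_j for j ≠ 1, and the new handicaps Ê_j := E_j + α(a_1; s_1, s_j) for all j, where α(p;q,r) := (d(p,q)+d(p,r)−d(q,r))/2. Then Φ(ŝ,a,Ê) − Φ(s,a,E) + d(s_1,a_1) ≤ 0. -/

import Mathlib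

/-!
Let `d = d(s_{i₀}, a_{i₀})` and `A_j = α(s_{i₀}; a_{i₀}, s_j)`. Before the move only server `i₀`
is unmatched, so `ε^j = A_j`; afterwards every server is matched and all `ε^j` vanish. Since
`α(s_{i₀}; a_{i₀}, x) + α(a_{i₀}; s_{i₀}, x) = d`, the handicap update shifts every `e_j`, hence
`e_max`, by exactly `d`. The three parts of the potential then change by `(k - 1)·d − 2·ΣA`,
`−k·d` and `2·ΣA`, so the potential drops by exactly the cost `d`.
-/

/-- The isolation index `α(p; q, r) = (d(p,q) + d(p,r) − d(q,r)) / 2`. -/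
noncomputable def alpha {M : Type*} [MetricSpace M] (p q r : M) : ℝ :=
  (dist p q + dist p r - dist q r) / 2

/-- The Teia potential `Φ(s, a, E)`:
`Σ_{i<j} d(s_i,s_j) + k·Σ_i d(s_i,a_i) + 2·Σ_i (e_max − E_i)`,
where `ε^i = Σ_j α(s_j; a_j, s_i)`, `e_i = E_i − ε^i`, and
`e_max = max_i e_i`. -/
noncomputable def teiaPhi {M : Type*} [MetricSpace M] {k : ℕ}
    (s a : Fin k → M) (E : Fin k → ℝ) : ℝ :=
  (∑ i : Fin k, ∑ j ∈ Finset.Ioi i, dist (s i) (s j))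
    + k * ∑ i : Fin k, dist (s i) (a i)
    + 2 * ∑ i : Fin k,
        ((⨆ j : Fin k, (E j - ∑ l : Fin k, alpha (s l) (a l) (s j))) - E i)

namespace Teia

open Finset

section Alpha

variable {M : Type*} [MetricSpace M]

theorem alpha_self_left (p r : M) : alpha p p r = 0 := by
  simp [alpha]

theorem alpha_add_alpha_comm (p q r : M) : alpha p q r + alpha q p r = dist p q := by
  simp only [alpha, dist_comm q p]
  ring

theorem dist_sub_dist_eq_sub_two_mul_alpha (p q r : M) :
    dist q r - dist p r = dist p q - 2 * alpha p q r := by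
  simp only [alpha]
  ring

end Alpha

theorem sum_iSup_sub_of_forall_eq_add {ι : Type*} [Fintype ι] [Nonempty ι]
    (e e' E E' : ι → ℝ) (c : ℝ) (h : ∀ j, e' j = e j + c) :
    ∑ i, ((⨆ j, e' j) - E' i) = ∑ i, ((⨆ j, e j) - E i) + ∑ i, (c + E i - E' i) := by
  have hsup : (⨆ j, e' j) = (⨆ j, e j) + c := by
    have := (OrderIso.addRight c).map_ciSup (Set.finite_range e).bddAbove
    simp only [OrderIso.addRight_apply] at this
    rw [this]
    exact iSup_congr h
  rw [← sum_add_distrib]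
  exact sum_congr rfl fun i _ => by rw [hsup]; ring

variable {M : Type*} [MetricSpace M] {k : ℕ}

theorem sum_Ioi_dist_update_of_forall_le (s : Fin k → M) (i₀ : Fin k) (hi₀ : ∀ j, i₀ ≤ j)
    (x : M) :
    ∑ i, ∑ j ∈ Ioi i, dist (Function.update s i₀ x i) (Function.update s i₀ x j)
      = ∑ i, ∑ j ∈ Ioi i, dist (s i) (s j)
        + ∑ j ∈ univ.erase i₀, (dist x (s j) - dist (s i₀) (s j)) := by
  have hIoi : Ioi i₀ = univ.erase i₀ := by
    ext j
    simpa [ne_comm] using (hi₀ j).lt_iff_ne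
  have hrest : ∀ i ∈ univ.erase i₀,
      ∑ j ∈ Ioi i, dist (Function.update s i₀ x i) (Function.update s i₀ x j)
        = ∑ j ∈ Ioi i, dist (s i) (s j) := by
    intro i hi
    refine sum_congr rfl fun j hj => ?_
    have hj : j ≠ i₀ := ((hi₀ i).trans_lt (mem_Ioi.mp hj)).ne'
    rw [Function.update_of_ne (ne_of_mem_erase hi), Function.update_of_ne hj]
  have hfirst : ∑ j ∈ Ioi i₀, dist (Function.update s i₀ x i₀) (Function.update s i₀ x j)
      = ∑ j ∈ univ.erase i₀, dist x (s j) := by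
    rw [hIoi]
    exact sum_congr rfl fun j hj => by
      rw [Function.update_self, Function.update_of_ne (ne_of_mem_erase hj)]
  rw [← add_sum_erase _ _ (mem_univ i₀), ← add_sum_erase _ _ (mem_univ i₀), sum_congr rfl hrest,
    hfirst, hIoi, sum_sub_distrib]
  ring

section OpenServer

variable (s a : Fin k → M) (i₀ : Fin k) (h : ∀ j, j ≠ i₀ → s j = a j)
include h

theorem sum_alpha_eq_of_eq_off (x : M) :
    ∑ l, alpha (s l) (a l) x = alpha (s i₀) (a i₀) x :=
  sum_eq_single i₀ (fun l _ hl => by rw [h l hl, alpha_self_left]) (by simp)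

theorem sum_dist_eq_of_eq_off : ∑ i, dist (s i) (a i) = dist (s i₀) (a i₀) :=
  sum_eq_single i₀ (fun l _ hl => by rw [h l hl, dist_self]) (by simp)

theorem teiaPhi_update_eq_sub_dist (E : Fin k → ℝ) (hi₀ : ∀ j, i₀ ≤ j) :
    teiaPhi (Function.update s i₀ (a i₀)) a (fun j => E j + alpha (a i₀) (s i₀) (s j))
      = teiaPhi s a E - dist (s i₀) (a i₀) := by
  have : Nonempty (Fin k) := ⟨i₀⟩
  set d := dist (s i₀) (a i₀)
  set A : Fin k → ℝ := fun j => alpha (s i₀) (a i₀) (s j)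
  have hupdate : Function.update s i₀ (a i₀) = a := Function.update_eq_iff.mpr ⟨rfl, h⟩
  have hpair := sum_Ioi_dist_update_of_forall_le s i₀ hi₀ (a i₀)
  rw [hupdate] at hpair
  have hswap : ∀ j, alpha (a i₀) (s i₀) (s j) = d - A j := fun j => by
    linarith [alpha_add_alpha_comm (s i₀) (a i₀) (s j)]
  have hcross : ∑ j ∈ univ.erase i₀, (dist (a i₀) (s j) - dist (s i₀) (s j))
      = k * d - 2 * ∑ j, A j - d := by
    rw [sum_erase_eq_sub (mem_univ _), dist_self, sub_zero, dist_comm (a i₀)]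
    simp only [dist_sub_dist_eq_sub_two_mul_alpha (s i₀) (a i₀), sum_sub_distrib, ← mul_sum,
      sum_const, card_univ, Fintype.card_fin, nsmul_eq_mul]
    rfl
  have hexcess : ∑ i, ((⨆ j, (E j + alpha (a i₀) (s i₀) (s j) - ∑ l, alpha (a l) (a l) (a j)))
        - (E i + alpha (a i₀) (s i₀) (s i)))
      = ∑ i, ((⨆ j, (E j - ∑ l, alpha (s l) (a l) (s j))) - E i) + ∑ j, A j := by
    have hshift : ∀ j, E j + alpha (a i₀) (s i₀) (s j) - ∑ l, alpha (a l) (a l) (a j)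
        = E j - ∑ l, alpha (s l) (a l) (s j) + d := fun j => by
      simp only [alpha_self_left, sum_const_zero, sum_alpha_eq_of_eq_off s a i₀ h, hswap]
      ring
    rw [sum_iSup_sub_of_forall_eq_add _ _ E (fun i => E i + alpha (a i₀) (s i₀) (s i)) d hshift]
    congr 1
    exact sum_congr rfl fun i _ => by rw [hswap]; ring
  simp only [teiaPhi]
  rw [hupdate, hpair, hcross, hexcess, sum_dist_eq_of_eq_off s a i₀ h]
  simp only [dist_self, sum_const_zero]
  ring

end OpenServer

end Teia

/-- Update condition for a lazy request served by the unmatched server: the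
request is `r = a_1`, server `1` moves to it, and the handicaps are updated by
`Ê_j = E_j + α(a_1; s_1, s_j)`.  Then `ΔΦ + cost_alg ≤ 0`. -/
theorem teiaPhi_lazy_request_open_server {M : Type*} [MetricSpace M] {k : ℕ}
    (hk : 1 ≤ k) (s a : Fin k → M) (E : Fin k → ℝ)
    (h : ∀ j : Fin k, j ≠ ⟨0, hk⟩ → s j = a j) :
    teiaPhi (Function.update s ⟨0, hk⟩ (a ⟨0, hk⟩)) a
        (fun j => E j + alpha (a ⟨0, hk⟩) (s ⟨0, hk⟩) (s j))
      - teiaPhi s a E + dist (s ⟨0, hk⟩) (a ⟨0, hk⟩) ≤ 0 := by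
  rw [Teia.teiaPhi_update_eq_sub_dist s a ⟨0, hk⟩ h E fun j => Nat.zero_le j.val]
  linarith
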